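/- For n ≥ 3, if α and β are partial isometries of C_n with |Dom(α)| = |Dom(β)| = 2, writing Dom(α) = {i₁, i₂} and Dom(β) = {i₁', i₂'}, then α and β are J-related in DPC_n if and only if d(i₁, i₂) = d(i₁', i₂'). -/

import Mathlib

/-- Geodesic distance on the cycle graph `C_n` with vertices `{1,...,n}`:
`d(x,y) = min (|x-y|, n-|x-y|)`. -/
def cdist (n x y : ℕ) : ℕ := min ((x : ℤ) - y).natAbs (n - ((x : ℤ) - y).natAbs)

/-- The n-cycle permutation `g` of `{1,...,n}`: `i ↦ i+1 (mod n)`. -/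
def gfun (n i : ℕ) : ℕ := if i < n then i + 1 else 1

/-- The reversal permutation `h` of `{1,...,n}`: `i ↦ n-i+1`. -/
def hfun (n i : ℕ) : ℕ := n - i + 1

/-- Left-to-right composition of partial maps (apply `f`, then `g`). -/
def pcomp (f g : ℕ → Option ℕ) : ℕ → Option ℕ := fun x => (f x).bind g

/-- The partial identity on `{1,...,n}`. -/
def pid (n : ℕ) : ℕ → Option ℕ := fun i => if i ∈ Finset.Icc 1 n then some i else none

/-- `g` as a partial map with domain `{1,...,n}`. -/
def gmap (n : ℕ) : ℕ → Option ℕ := fun i => if i ∈ Finset.Icc 1 n then some (gfun n i) else none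

/-- `h` as a partial map with domain `{1,...,n}`. -/
def hmap (n : ℕ) : ℕ → Option ℕ := fun i => if i ∈ Finset.Icc 1 n then some (hfun n i) else none

/-- `e_j`: the partial identity with domain `{1,...,n} \ {j}`. -/
def emap (n j : ℕ) : ℕ → Option ℕ := fun i => if i ∈ Finset.Icc 1 n ∧ i ≠ j then some i else none

/-- `k`-th power of a partial map (with identity `pid n`). -/
def ppow (n : ℕ) (f : ℕ → Option ℕ) : ℕ → (ℕ → Option ℕ)
  | 0 => pid n
  | k + 1 => pcomp f (ppow n f k)

/-- `f` is a partial isometry of the cycle graph `C_n`: a partial injective map on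
`{1,...,n}` preserving the cycle distance. -/
def PIso (n : ℕ) (f : ℕ → Option ℕ) : Prop :=
  (∀ x y, f x = some y → x ∈ Finset.Icc 1 n ∧ y ∈ Finset.Icc 1 n) ∧
  (∀ x y z, f x = some z → f y = some z → x = y) ∧
  (∀ x y x' y', f x = some x' → f y = some y' → cdist n x' y' = cdist n x y)

/-- Domain of a partial map, as a set. -/
def DomS (f : ℕ → Option ℕ) : Set ℕ := {x | (f x).isSome}

/-- Image of a partial map, as a set. -/
def ImS (f : ℕ → Option ℕ) : Set ℕ := {y | ∃ x, f x = some y}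

/-- Domain of a partial map on `{1,...,n}`, as a finset. -/
def domF (n : ℕ) (f : ℕ → Option ℕ) : Finset ℕ :=
  (Finset.Icc 1 n).filter (fun x => (f x).isSome)

/-- The dihedral group `D_{2n}` as the set of the permutations `g^k` and `h·g^k`
(acting on the right, so `h·g^k` applies `h` first) of `{1,...,n}`, `0 ≤ k ≤ n-1`. -/
def Dih (n : ℕ) : Set (ℕ → ℕ) :=
  {σ | ∃ k < n, σ = (gfun n)^[k] ∨ σ = fun i => (gfun n)^[k] (hfun n i)}

/-- `σ` extends the partial map `f`. -/
def Extends (σ : ℕ → ℕ) (f : ℕ → Option ℕ) : Prop := ∀ x y, f x = some y → σ x = y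


/-!
If `b = c a d` is defined at two points `p₁' ≠ p₂'`, then `c` maps them injectively and
isometrically into `Dom a = {p₁, p₂}`, so `d(p₁', p₂') = d(p₁, p₂)`. Conversely, if the two domains
have equal diameter, then so do the two images, and the two-point isometries matching the domains
and matching the images give `b = c a d` and `a = c' b d'`.
-/

lemma cdist_comm (n x y : ℕ) : cdist n x y = cdist n y x := by
  have h : ((x : ℤ) - y).natAbs = ((y : ℤ) - x).natAbs := by omega
  rw [cdist, cdist, h]

lemma cdist_eq_of_mem_pair {n p1 p2 u1 u2 : ℕ} (hu1 : u1 ∈ ({p1, p2} : Set ℕ))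
    (hu2 : u2 ∈ ({p1, p2} : Set ℕ)) (hu : u1 ≠ u2) : cdist n u1 u2 = cdist n p1 p2 := by
  rcases hu1 with rfl | rfl <;> rcases hu2 with rfl | rfl
  · exact absurd rfl hu
  · rfl
  · exact cdist_comm n _ _
  · exact absurd rfl hu

lemma pcomp_eq_some {f g : ℕ → Option ℕ} {x y : ℕ} (h : pcomp f g x = some y) :
    ∃ z, f x = some z ∧ g z = some y :=
  Option.bind_eq_some_iff.mp h

lemma pcomp_assoc (f g h : ℕ → Option ℕ) :
    pcomp (pcomp f g) h = pcomp f (pcomp g h) := by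
  funext x
  exact Option.bind_assoc _ _ _

lemma PIso.pcomp {n : ℕ} {f g : ℕ → Option ℕ} (hf : PIso n f) (hg : PIso n g) :
    PIso n (pcomp f g) := by
  refine ⟨fun x y h => ?_, fun x y z hx hy => ?_, fun x y x' y' hx hy => ?_⟩
  · obtain ⟨u, hu, hgu⟩ := pcomp_eq_some h
    exact ⟨(hf.1 x u hu).1, (hg.1 u y hgu).2⟩
  · obtain ⟨u, hu, hgu⟩ := pcomp_eq_some hx
    obtain ⟨v, hv, hgv⟩ := pcomp_eq_some hy
    obtain rfl := hg.2.1 u v z hgu hgv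
    exact hf.2.1 x y u hu hv
  · obtain ⟨u, hu, hgu⟩ := pcomp_eq_some hx
    obtain ⟨v, hv, hgv⟩ := pcomp_eq_some hy
    rw [hg.2.2 u v x' y' hgu hgv, hf.2.2 x y u v hu hv]

lemma pIso_pid (n : ℕ) : PIso n (pid n) := by
  refine ⟨fun x y h => ?_, fun x y z hx hy => ?_, fun x y x' y' hx hy => ?_⟩ <;>
    simp only [pid, Option.ite_none_right_eq_some, Option.some.injEq] at * <;> grind

lemma pid_pcomp_pcomp_pid {n : ℕ} {f : ℕ → Option ℕ} (hf : PIso n f) :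
    pcomp (pid n) (pcomp f (pid n)) = f := by
  funext x
  cases hfx : f x with
  | none => simp [pcomp, pid, hfx]
  | some y =>
    obtain ⟨hx, hy⟩ := hf.1 x y hfx
    simp [pcomp, pid, hx, hy, hfx]

def principalIdeal (n : ℕ) (a : ℕ → Option ℕ) : Set (ℕ → Option ℕ) :=
  {x | ∃ c d, PIso n c ∧ PIso n d ∧ pcomp c (pcomp a d) = x}

lemma mem_principalIdeal_self {n : ℕ} {a : ℕ → Option ℕ} (ha : PIso n a) :
    a ∈ principalIdeal n a :=
  ⟨pid n, pid n, pIso_pid n, pIso_pid n, pid_pcomp_pcomp_pid ha⟩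

lemma principalIdeal_subset_of_mem {n : ℕ} {a b : ℕ → Option ℕ} (hb : b ∈ principalIdeal n a) :
    principalIdeal n b ⊆ principalIdeal n a := by
  obtain ⟨c, d, hc, hd, rfl⟩ := hb
  rintro x ⟨c', d', hc', hd', rfl⟩
  exact ⟨pcomp c' c, pcomp d d', hc'.pcomp hc, hd.pcomp hd', by simp only [pcomp_assoc]⟩

lemma cdist_eq_of_mem_principalIdeal {n p1 p2 p1' p2' : ℕ} {a b : ℕ → Option ℕ}
    (hda : DomS a = {p1, p2}) (hb1 : (b p1').isSome) (hb2 : (b p2').isSome) (hp' : p1' ≠ p2')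
    (hb : b ∈ principalIdeal n a) : cdist n p1' p2' = cdist n p1 p2 := by
  obtain ⟨c, d, hc, -, rfl⟩ := hb
  obtain ⟨y1, hy1⟩ := Option.isSome_iff_exists.mp hb1
  obtain ⟨y2, hy2⟩ := Option.isSome_iff_exists.mp hb2
  obtain ⟨u1, hcu1, hu1⟩ := pcomp_eq_some hy1
  obtain ⟨u2, hcu2, hu2⟩ := pcomp_eq_some hy2
  obtain ⟨v1, hav1, -⟩ := pcomp_eq_some hu1
  obtain ⟨v2, hav2, -⟩ := pcomp_eq_some hu2
  have hmem1 : u1 ∈ DomS a := Option.isSome_iff_exists.mpr ⟨v1, hav1⟩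
  have hmem2 : u2 ∈ DomS a := Option.isSome_iff_exists.mpr ⟨v2, hav2⟩
  rw [hda] at hmem1 hmem2
  have hu : u1 ≠ u2 := fun h => hp' (hc.2.1 p1' p2' u1 hcu1 (h ▸ hcu2))
  rw [← hc.2.2 p1' p2' u1 u2 hcu1 hcu2]
  exact cdist_eq_of_mem_pair hmem1 hmem2 hu

def pmap2 (p1 q1 p2 q2 : ℕ) : ℕ → Option ℕ :=
  fun x => if x = p1 then some q1 else if x = p2 then some q2 else none

lemma exists_eq_pmap2 {a : ℕ → Option ℕ} {p1 p2 : ℕ} (hda : DomS a = {p1, p2}) :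
    ∃ q1 q2, a = pmap2 p1 q1 p2 q2 := by
  have hmem1 : p1 ∈ DomS a := by simp [hda]
  have hmem2 : p2 ∈ DomS a := by simp [hda]
  obtain ⟨q1, hq1⟩ := Option.isSome_iff_exists.mp hmem1
  obtain ⟨q2, hq2⟩ := Option.isSome_iff_exists.mp hmem2
  refine ⟨q1, q2, funext fun x => ?_⟩
  by_cases hx : x ∈ DomS a
  · rw [hda] at hx
    rcases hx with rfl | rfl
    · simp [pmap2, hq1]
    · by_cases h : x = p1 <;> simp_all [pmap2]
  · have hx' : x ≠ p1 ∧ x ≠ p2 := by rw [hda] at hx; simpa [not_or] using hx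
    simpa [pmap2, hx'.1, hx'.2, DomS] using hx

lemma pIso_pmap2_iff {n p1 q1 p2 q2 : ℕ} (hp : p1 ≠ p2) :
    PIso n (pmap2 p1 q1 p2 q2) ↔
      (p1 ∈ Finset.Icc 1 n ∧ q1 ∈ Finset.Icc 1 n ∧ p2 ∈ Finset.Icc 1 n ∧ q2 ∈ Finset.Icc 1 n) ∧
        q1 ≠ q2 ∧ cdist n q1 q2 = cdist n p1 p2 := by
  have h1 : pmap2 p1 q1 p2 q2 p1 = some q1 := by simp [pmap2]
  have h2 : pmap2 p1 q1 p2 q2 p2 = some q2 := by simp [pmap2, hp.symm]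
  constructor
  · intro h
    exact ⟨⟨(h.1 _ _ h1).1, (h.1 _ _ h1).2, (h.1 _ _ h2).1, (h.1 _ _ h2).2⟩,
      fun hq => hp (h.2.1 p1 p2 q1 h1 (hq ▸ h2)), h.2.2 _ _ _ _ h1 h2⟩
  · rintro ⟨⟨hp1, hq1, hp2, hq2⟩, hq, hd⟩
    have hd' : cdist n q2 q1 = cdist n p2 p1 := by rw [cdist_comm, hd, cdist_comm]
    refine ⟨fun x y h => ?_, fun x y z hx hy => ?_, fun x y x' y' hx hy => ?_⟩ <;>
      simp only [pmap2] at * <;> split_ifs at * <;> simp_all [cdist]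

lemma pmap2_pcomp_pcomp_pmap2 {p1 q1 p2 q2 p1' q1' p2' q2' : ℕ} (hp : p1 ≠ p2) (hq : q1 ≠ q2) :
    pcomp (pmap2 p1' p1 p2' p2) (pcomp (pmap2 p1 q1 p2 q2) (pmap2 q1 q1' q2 q2')) =
      pmap2 p1' q1' p2' q2' := by
  funext x
  unfold pcomp pmap2
  split_ifs <;> simp_all [Ne.symm hp, Ne.symm hq]

lemma pmap2_mem_principalIdeal {n p1 q1 p2 q2 p1' q1' p2' q2' : ℕ}
    (ha : PIso n (pmap2 p1 q1 p2 q2)) (hb : PIso n (pmap2 p1' q1' p2' q2'))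
    (hp : p1 ≠ p2) (hp' : p1' ≠ p2') (hd : cdist n p1' p2' = cdist n p1 p2) :
    pmap2 p1' q1' p2' q2' ∈ principalIdeal n (pmap2 p1 q1 p2 q2) := by
  obtain ⟨⟨hp1, hq1, hp2, hq2⟩, hq, hda⟩ := (pIso_pmap2_iff hp).mp ha
  obtain ⟨⟨hp1', hq1', hp2', hq2'⟩, hq', hdb⟩ := (pIso_pmap2_iff hp').mp hb
  refine ⟨pmap2 p1' p1 p2' p2, pmap2 q1 q1' q2 q2', ?_, ?_, pmap2_pcomp_pcomp_pmap2 hp hq⟩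
  · exact (pIso_pmap2_iff hp').mpr ⟨⟨hp1', hp1, hp2', hp2⟩, hp, hd.symm⟩
  · exact (pIso_pmap2_iff hq).mpr ⟨⟨hq1, hq1', hq2, hq2'⟩, hq', by rw [hda, hdb, hd]⟩

theorem stmt_19_general (n : ℕ) (a b : ℕ → Option ℕ)
    (ha : PIso n a) (hb : PIso n b) (i1 i2 i1' i2' : ℕ)
    (h12 : i1 ≠ i2) (h12' : i1' ≠ i2')
    (hda : DomS a = {i1, i2}) (hdb : DomS b = {i1', i2'}) :
    {x | ∃ c d, PIso n c ∧ PIso n d ∧ pcomp c (pcomp a d) = x} =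
      {x | ∃ c d, PIso n c ∧ PIso n d ∧ pcomp c (pcomp b d) = x} ↔
    cdist n i1 i2 = cdist n i1' i2' := by
  obtain ⟨j1, j2, rfl⟩ := exists_eq_pmap2 hda
  obtain ⟨j1', j2', rfl⟩ := exists_eq_pmap2 hdb
  change principalIdeal n _ = principalIdeal n _ ↔ _
  refine ⟨fun h => ?_, fun h => ?_⟩
  · have hb_mem := h ▸ mem_principalIdeal_self hb
    exact (cdist_eq_of_mem_principalIdeal hda (by simp [pmap2]) (by simp [pmap2, h12'.symm])
      h12' hb_mem).symm
  · exact (principalIdeal_subset_of_mem (pmap2_mem_principalIdeal hb ha h12' h12 h)).antisymm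
      (principalIdeal_subset_of_mem (pmap2_mem_principalIdeal ha hb h12 h12' h.symm))

/-- two partial isometries of `C_n` with two-element domains `{i₁,i₂}` and
`{i₁',i₂'}` are J-related in `DPC_n` (equal principal two-sided ideals) iff
`d(i₁,i₂) = d(i₁',i₂')`. -/
theorem stmt_19 (n : ℕ) (hn : 3 ≤ n) (a b : ℕ → Option ℕ)
    (ha : PIso n a) (hb : PIso n b) (i1 i2 i1' i2' : ℕ)
    (h12 : i1 ≠ i2) (h12' : i1' ≠ i2')
    (hda : DomS a = {i1, i2}) (hdb : DomS b = {i1', i2'}) :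
    {x | ∃ c d, PIso n c ∧ PIso n d ∧ pcomp c (pcomp a d) = x} =
      {x | ∃ c d, PIso n c ∧ PIso n d ∧ pcomp c (pcomp b d) = x} ↔
    cdist n i1 i2 = cdist n i1' i2' :=
  stmt_19_general n a b ha hb i1 i2 i1' i2' h12 h12' hda hdb
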